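/- No formula in the language {¬,∧,∨,■,𝐈} defines □p on S5 frames: in the three-point S5 model M with universal accessibility, where p is exactly true at w₀ and w₂ and p is both true and false at w₁, there is no formula φ of this language that is both true and false at w₀ and also both true and false at w₂, whereas □p is both true and false at both w₀ and w₂. -/

import Mathlib

/-- Formulas of the language with ¬, ∧, ∨, □, ■, 𝐈 and ▲. -/
inductive Form : Type
  | var : ℕ → Form
  | neg : Form → Form
  | conj : Form → Form → Form
  | disj : Form → Form → Form
  | box : Form → Form
  | bbox : Form → Form
  | ign : Form → Form
  | tri : Form → Form

/-- A Kripke model for Belnap–Dunn modal logic. -/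
structure Model (W : Type) where
  R : W → W → Prop
  vp : ℕ → W → Prop
  vn : ℕ → W → Prop

mutual
  /-- support of truth -/
  def tr {W : Type} (M : Model W) : Form → W → Prop
    | .var n, w => M.vp n w
    | .neg φ, w => fa M φ w
    | .conj φ ψ, w => tr M φ w ∧ tr M ψ w
    | .disj φ ψ, w => tr M φ w ∨ tr M ψ w
    | .box φ, w => ∀ w', M.R w w' → tr M φ w'
    | .bbox φ, w => (∀ w', M.R w w' → tr M φ w') ∧
        ∀ w₁ w₂, M.R w w₁ → M.R w w₂ → fa M φ w₁ → fa M φ w₂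
    | .ign φ, w => tr M φ w ∧ (∀ w', M.R w w' → w' ≠ w → fa M φ w') ∧
        ∀ w₁ w₂, M.R w w₁ → w₁ ≠ w → M.R w w₂ → w₂ ≠ w → tr M φ w₁ → tr M φ w₂
    | .tri φ, w => (∀ w₁ w₂, M.R w w₁ → M.R w w₂ →
          (tr M φ w₁ → tr M φ w₂) ∧ (fa M φ w₁ → fa M φ w₂)) ∧
        ∀ w', M.R w w' → tr M φ w' ∨ fa M φ w'
  /-- support of falsity -/
  def fa {W : Type} (M : Model W) : Form → W → Prop
    | .var n, w => M.vn n w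
    | .neg φ, w => tr M φ w
    | .conj φ ψ, w => fa M φ w ∨ fa M ψ w
    | .disj φ ψ, w => fa M φ w ∧ fa M ψ w
    | .box φ, w => ∃ w', M.R w w' ∧ fa M φ w'
    | .bbox φ, w => (∃ w', M.R w w' ∧ fa M φ w') ∨
        ∃ w₁ w₂, M.R w w₁ ∧ M.R w w₂ ∧ tr M φ w₁ ∧ ¬ tr M φ w₂
    | .ign φ, w => fa M φ w ∨ (∃ w', M.R w w' ∧ w' ≠ w ∧ tr M φ w') ∨
        ∃ w₁ w₂, (M.R w w₁ ∧ w₁ ≠ w) ∧ (M.R w w₂ ∧ w₂ ≠ w) ∧ ¬ fa M φ w₁ ∧ fa M φ w₂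
    | .tri φ, w => (∃ w₁ w₂, M.R w w₁ ∧ M.R w w₂ ∧ tr M φ w₁ ∧ ¬ tr M φ w₂) ∨
        (∃ w₁ w₂, M.R w w₁ ∧ M.R w w₂ ∧ fa M φ w₁ ∧ ¬ fa M φ w₂) ∨
        (∃ w₁ w₂, M.R w w₁ ∧ M.R w w₂ ∧ tr M φ w₁ ∧ fa M φ w₂)
end

/-- φ contains an occurrence of □ -/
def hasBox : Form → Prop
  | .var _ => False
  | .neg φ => hasBox φ
  | .conj φ ψ => hasBox φ ∨ hasBox ψ
  | .disj φ ψ => hasBox φ ∨ hasBox ψ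
  | .box _ => True
  | .bbox φ => hasBox φ
  | .ign φ => hasBox φ
  | .tri φ => hasBox φ

/-- φ contains an occurrence of ■ -/
def hasBBox : Form → Prop
  | .var _ => False
  | .neg φ => hasBBox φ
  | .conj φ ψ => hasBBox φ ∨ hasBBox ψ
  | .disj φ ψ => hasBBox φ ∨ hasBBox ψ
  | .box φ => hasBBox φ
  | .bbox _ => True
  | .ign φ => hasBBox φ
  | .tri φ => hasBBox φ

/-- φ contains an occurrence of 𝐈 -/
def hasIgn : Form → Prop
  | .var _ => False
  | .neg φ => hasIgn φ
  | .conj φ ψ => hasIgn φ ∨ hasIgn ψ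
  | .disj φ ψ => hasIgn φ ∨ hasIgn ψ
  | .box φ => hasIgn φ
  | .bbox φ => hasIgn φ
  | .ign _ => True
  | .tri φ => hasIgn φ

/-- φ contains an occurrence of ▲ -/
def hasTri : Form → Prop
  | .var _ => False
  | .neg φ => hasTri φ
  | .conj φ ψ => hasTri φ ∨ hasTri ψ
  | .disj φ ψ => hasTri φ ∨ hasTri ψ
  | .box φ => hasTri φ
  | .bbox φ => hasTri φ
  | .ign φ => hasTri φ
  | .tri _ => True

/-- validity of the sequent φ ⊢ χ on the frame (W,R) -/
def validOn {W : Type} (R : W → W → Prop) (φ χ : Form) : Prop :=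
  ∀ (vp vn : ℕ → W → Prop) (w : W), tr ⟨R, vp, vn⟩ φ w → tr ⟨R, vp, vn⟩ χ w

/-- ♦φ := ¬■¬φ -/
def dia (φ : Form) : Form := .neg (.bbox (.neg φ))

/-!
Swapping w₀ and w₂ is an automorphism of M, so truth and falsity of every formula are the same
at w₀ and w₂. By induction, no {¬,∧,∨,■,𝐈}-formula is both true and false at w₀: if 𝐈φ is true
at w₀, then φ is true at w₀ and false at w₂, hence false at w₀; if ■φ is true at w₀, then φ is
true everywhere and its falsity, wherever it holds, reaches w₀ through the agreement clause.
-/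

structure Model.IsIso {W V : Type} (M : Model W) (N : Model V) (e : W ≃ V) : Prop where
  map_R : ∀ u v, N.R (e u) (e v) ↔ M.R u v
  map_vp : ∀ n w, N.vp n (e w) ↔ M.vp n w
  map_vn : ∀ n w, N.vn n (e w) ↔ M.vn n w

theorem Model.IsIso.tr_iff_and_fa_iff {W V : Type} {M : Model W} {N : Model V} {e : W ≃ V}
    (he : M.IsIso N e) (φ : Form) :
    (∀ w, tr N φ (e w) ↔ tr M φ w) ∧ (∀ w, fa N φ (e w) ↔ fa M φ w) := by
  induction φ with
  | var n => exact ⟨he.map_vp n, he.map_vn n⟩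
  | neg φ ih => exact ⟨ih.2, ih.1⟩
  | conj φ ψ ih₁ ih₂ | disj φ ψ ih₁ ih₂ =>
    simp only [tr, fa, ih₁.1, ih₁.2, ih₂.1, ih₂.2, implies_true, and_self]
  | box φ ih | bbox φ ih | ign φ ih | tri φ ih =>
    simp only [tr, fa, ← e.forall_congr_right, ← e.exists_congr_right, he.map_R, ih.1, ih.2,
      e.apply_eq_iff_eq, ne_eq, implies_true, and_self]

def threePointModel : Model (Fin 3) := ⟨fun _ _ => True, fun _ _ => True, fun _ w => w = 1⟩

theorem threePointModel_isIso_swap : threePointModel.IsIso threePointModel (Equiv.swap 0 2) where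
  map_R _ _ := Iff.rfl
  map_vp _ _ := Iff.rfl
  map_vn _ w := by simp only [threePointModel]; revert w; decide

theorem threePointModel_not_fa_zero_of_tr_zero (φ : Form) (hb : ¬ hasBox φ) (ht : ¬ hasTri φ)
    (htr : tr threePointModel φ 0) : ¬ fa threePointModel φ 0 := by
  induction φ with
  | var n => simp [fa, threePointModel]
  | neg φ ih => exact fun hfa => ih hb ht hfa htr
  | conj φ ψ ih₁ ih₂ =>
    simp only [hasBox, hasTri, not_or] at hb ht
    exact not_or.2 ⟨ih₁ hb.1 ht.1 htr.1, ih₂ hb.2 ht.2 htr.2⟩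
  | disj φ ψ ih₁ ih₂ =>
    simp only [hasBox, hasTri, not_or] at hb ht
    rintro ⟨hfa₁, hfa₂⟩
    exact htr.elim (ih₁ hb.1 ht.1 · hfa₁) (ih₂ hb.2 ht.2 · hfa₂)
  | box => exact absurd trivial hb
  | tri => exact absurd trivial ht
  | bbox φ ih =>
    obtain ⟨htr_all, hfa_uniform⟩ := htr
    rintro (⟨w, -, hfa⟩ | ⟨-, w, -, -, -, hntr⟩)
    · exact ih hb ht (htr_all 0 trivial) (hfa_uniform w 0 trivial trivial hfa)
    · exact hntr (htr_all w trivial)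
  | ign φ ih =>
    obtain ⟨htr₀, hfa_others, -⟩ := htr
    have hfa₀ : fa threePointModel φ 0 :=
      ((threePointModel_isIso_swap.tr_iff_and_fa_iff φ).2 0).1 (hfa_others 2 trivial (by decide))
    exact fun _ => ih hb ht htr₀ hfa₀

/-- no {¬,∧,∨,■,𝐈}-formula defines □p on S5 frames. -/
theorem bbox_ign_cannot_define_box :
    let M : Model (Fin 3) := ⟨fun _ _ => True, fun _ _ => True, fun _ w => w = 1⟩
    (∀ φ : Form, ¬ hasBox φ → ¬ hasTri φ →
      ¬ (tr M φ 0 ∧ fa M φ 0 ∧ tr M φ 2 ∧ fa M φ 2)) ∧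
    (tr M (.box (.var 0)) 0 ∧ fa M (.box (.var 0)) 0 ∧
     tr M (.box (.var 0)) 2 ∧ fa M (.box (.var 0)) 2) := by
  refine ⟨fun φ hb ht h => threePointModel_not_fa_zero_of_tr_zero φ hb ht h.1 h.2.1, ?_⟩
  exact ⟨fun _ _ => trivial, ⟨1, trivial, rfl⟩, fun _ _ => trivial, ⟨1, trivial, rfl⟩⟩
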